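/- arXiv:1803.07841 — 3 statements merged into one kernel-verified Lean document; each statement's English description precedes it below -/
import Mathlib

section
/- There exists a unique sequence of polynomials C_n(τ) over ℚ satisfying C_0(τ) = τ²/3 − 1/3 and, for n ≥ 1, C_n(τ) + τ C'_n(τ) − C''_n(τ) = τ(τ² − 2) C_{n−1}(τ) − (2τ² − 1) C'_{n−1}(τ) + τ C''_{n−1}(τ). -/
open Polynomial

/-! The left-hand side of the recurrence is `L w = w + τ w' - w''`, that is `1 - H` for the
Hermite operator `H w = w'' - τ w'`. In the monomial basis `L` is triangular,
`L τ^d = (d + 1) τ^d - d (d - 1) τ^(d-2)`, with nonzero diagonal entries `d + 1`; so `L` is a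
bijection of `ℚ[τ]`, and the recurrence determines `C_{n+1}` from `C_n`. -/

theorem existsUnique_seq_of_bijective {α β : Type*} {L : α → β} (hL : Function.Bijective L)
    (R : α → β) (a : α) : ∃! s : ℕ → α, s 0 = a ∧ ∀ n, L (s (n + 1)) = R (s n) := by
  let e := Equiv.ofBijective L hL
  refine ⟨fun n => Nat.rec a (fun _ x => e.symm (R x)) n, ⟨rfl, fun n => e.apply_symm_apply _⟩,
    fun t ⟨ht0, htrec⟩ => funext fun n => ?_⟩
  induction n with
  | zero => exact ht0
  | succ n ih =>
    apply hL.1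
    rw [htrec n, ih]
    exact (e.apply_symm_apply _).symm

namespace Polynomial

section CommRing

variable {R : Type*} [CommRing R]

noncomputable def oneSubHermiteOp : R[X] →ₗ[R] R[X] :=
  LinearMap.id + LinearMap.mulLeft R X ∘ₗ derivative - derivative ∘ₗ derivative

theorem oneSubHermiteOp_apply (p : R[X]) :
    oneSubHermiteOp p = p + X * derivative p - derivative (derivative p) :=
  rfl

theorem coeff_oneSubHermiteOp (p : R[X]) (n : ℕ) :
    (oneSubHermiteOp p).coeff n = (n + 1) * p.coeff n - (n + 2) * (n + 1) * p.coeff (n + 2) := by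
  rw [oneSubHermiteOp_apply]
  cases n with
  | zero =>
    simp only [coeff_sub, coeff_add, mul_coeff_zero, coeff_X_zero, coeff_derivative,
      Nat.cast_zero, zero_mul, zero_add, add_zero, Nat.reduceAdd, Nat.cast_one, one_mul]
    ring
  | succ n =>
    simp only [coeff_sub, coeff_add, coeff_X_mul, coeff_derivative]
    push_cast
    ring

theorem oneSubHermiteOp_X_pow_add_two (n : ℕ) :
    oneSubHermiteOp (X ^ (n + 2) : R[X]) =
      C ((n : R) + 3) * X ^ (n + 2) - C (((n : R) + 2) * (n + 1)) * X ^ n := by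
  have h1 : derivative (X ^ (n + 2) : R[X]) = C ((n : R) + 2) * X ^ (n + 1) := by
    rw [derivative_X_pow]; norm_num
  have h2 : derivative (C ((n : R) + 2) * X ^ (n + 1)) =
      C ((n : R) + 2) * (C ((n : R) + 1) * X ^ n) := by
    rw [derivative_C_mul, derivative_X_pow]; norm_num
  rw [oneSubHermiteOp_apply, h1, h2]
  simp only [map_add, map_mul, map_natCast, map_ofNat]
  ring

theorem oneSubHermiteOp_injective [IsDomain R] [CharZero R] :
    Function.Injective (oneSubHermiteOp : R[X] → R[X]) := by
  refine (injective_iff_map_eq_zero _).2 fun p hp => ?_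
  have hlead := coeff_oneSubHermiteOp p p.natDegree
  rw [hp, coeff_eq_zero_of_natDegree_lt (by omega : p.natDegree < p.natDegree + 2)] at hlead
  simpa [Nat.cast_add_one_ne_zero] using hlead.symm

end CommRing

section Field

variable {K : Type*} [Field K] [CharZero K]

theorem X_pow_mem_range_oneSubHermiteOp (n : ℕ) :
    (X ^ n : K[X]) ∈ LinearMap.range oneSubHermiteOp := by
  induction n using Nat.strong_induction_on with
  | _ n ih =>
  suffices h : C ((n : K) + 1) * X ^ n ∈ LinearMap.range oneSubHermiteOp by
    have := Submodule.smul_mem _ ((n : K) + 1)⁻¹ h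
    rwa [smul_eq_C_mul, ← mul_assoc, ← C_mul, inv_mul_cancel₀ (Nat.cast_add_one_ne_zero n), C_1,
      one_mul] at this
  match n, ih with
  | 0, _ => exact ⟨1, by simp [oneSubHermiteOp_apply]⟩
  | 1, _ =>
    refine ⟨X, ?_⟩
    simp only [oneSubHermiteOp_apply, derivative_X, derivative_one, Nat.cast_one, map_add, map_one,
      mul_one, sub_zero, pow_one]
    ring
  | m + 2, ih =>
    have hL := oneSubHermiteOp_X_pow_add_two (R := K) m
    push_cast
    rw [show (m : K) + 2 + 1 = m + 3 by ring, ← eq_sub_iff_add_eq.1 hL]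
    exact add_mem (LinearMap.mem_range_self _ _)
      (by simpa only [smul_eq_C_mul] using Submodule.smul_mem _ _ (ih m (by omega)))

theorem oneSubHermiteOp_surjective : Function.Surjective (oneSubHermiteOp : K[X] → K[X]) := by
  refine LinearMap.range_eq_top.1 (Submodule.eq_top_iff'.2 fun p => ?_)
  induction p using Polynomial.induction_on' with
  | add p q hp hq => exact add_mem hp hq
  | monomial n a =>
    rw [← C_mul_X_pow_eq_monomial, ← smul_eq_C_mul]
    exact Submodule.smul_mem _ a (X_pow_mem_range_oneSubHermiteOp n)

end Field

end Polynomial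

/-- There is a unique sequence of polynomials `C_n` over `ℚ` with
`C_0 = τ²/3 - 1/3` and satisfying the differential recurrence
`C_n + τ C_n' - C_n'' = τ(τ²-2) C_{n-1} - (2τ²-1) C_{n-1}' + τ C_{n-1}''`. -/
theorem C_exists_unique :
    ∃! Cs : ℕ → Polynomial ℚ,
      Cs 0 = C (1 / 3) * X ^ 2 - C (1 / 3) ∧
      ∀ n : ℕ,
        Cs (n + 1) + X * derivative (Cs (n + 1)) - derivative (derivative (Cs (n + 1))) =
          X * (X ^ 2 - C 2) * Cs n - (C 2 * X ^ 2 - 1) * derivative (Cs n) +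
            X * derivative (derivative (Cs n)) := by
  simpa only [oneSubHermiteOp_apply] using
    existsUnique_seq_of_bijective ⟨oneSubHermiteOp_injective, oneSubHermiteOp_surjective⟩
      (fun p => X * (X ^ 2 - C 2) * p - (C 2 * X ^ 2 - 1) * derivative p +
        X * derivative (derivative p)) (C (1 / 3) * X ^ 2 - C (1 / 3))
end

section
/- For the polynomials C_n defined by C_0(τ) = τ²/3 − 1/3 and the recurrence C_n + τ C'_n − C''_n = τ(τ²−2)C_{n−1} − (2τ²−1)C'_{n−1} + τ C''_{n−1}, the degree of C_n is exactly 3n + 2, with leading coefficient 1/(3^{n+1}(n+1)!). -/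
/-!
Write `L w = w + τ w' - w''`. On coefficients, `(L w)_k = (k + 1) w_k - (k + 1)(k + 2) w_{k+2}`, so
`L` preserves the degree `d` of `w` and multiplies its leading coefficient by `d + 1`. The right-hand
side of the recurrence is `τ³ C_{n-1}` plus terms of degree at most `deg C_{n-1} + 2`. Hence
`deg C_n = deg C_{n-1} + 3` and `(3n + 3) · lc C_n = lc C_{n-1}`.
-/

open Polynomial

namespace Polynomial

variable {R : Type*} [CommRing R]

noncomputable def recurrenceLHS (w : R[X]) : R[X] :=
  w + X * derivative w - derivative (derivative w)

noncomputable def recurrenceRHS (p : R[X]) : R[X] :=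
  X * (X ^ 2 - C 2) * p - (C 2 * X ^ 2 - 1) * derivative p + X * derivative (derivative p)

theorem coeff_recurrenceLHS (w : R[X]) (k : ℕ) :
    (recurrenceLHS w).coeff k = (k + 1) * w.coeff k - (k + 1) * (k + 2) * w.coeff (k + 2) := by
  cases k with
  | zero =>
    simp only [recurrenceLHS, coeff_sub, coeff_add, mul_coeff_zero, coeff_X_zero, coeff_derivative]
    ring
  | succ k =>
    simp only [recurrenceLHS, coeff_sub, coeff_add, coeff_X_mul, coeff_derivative]
    push_cast
    ring

theorem coeff_recurrenceLHS_natDegree (w : R[X]) :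
    (recurrenceLHS w).coeff w.natDegree = (w.natDegree + 1) * w.leadingCoeff := by
  rw [coeff_recurrenceLHS, coeff_eq_zero_of_natDegree_lt (by omega : w.natDegree < w.natDegree + 2),
    leadingCoeff]
  ring

theorem natDegree_recurrenceLHS_le (w : R[X]) : (recurrenceLHS w).natDegree ≤ w.natDegree := by
  refine natDegree_le_iff_coeff_eq_zero.mpr fun k hk => ?_
  have hk : w.natDegree < k := by exact_mod_cast hk
  rw [coeff_recurrenceLHS, coeff_eq_zero_of_natDegree_lt hk,
    coeff_eq_zero_of_natDegree_lt (by omega : w.natDegree < k + 2)]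
  ring

theorem natDegree_recurrenceRHS_sub_le (p : R[X]) :
    (recurrenceRHS p - X ^ 3 * p).natDegree ≤ p.natDegree + 2 := by
  have hsplit : recurrenceRHS p - X ^ 3 * p = -C 2 * X * p - (C 2 * X ^ 2 - 1) * derivative p
      + X * derivative (derivative p) := by
    unfold recurrenceRHS
    ring
  have hp' := natDegree_derivative_le p
  have hp'' := natDegree_derivative_le (derivative p)
  rw [hsplit]
  refine natDegree_add_le_of_degree_le ((natDegree_sub_le_of_le ?_ ?_).trans (max_self _).le) ?_
  · exact (natDegree_mul_le_of_le (m := 1) (by compute_degree) le_rfl).trans (by omega)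
  · exact (natDegree_mul_le_of_le (m := 2) (by compute_degree) hp').trans (by omega)
  · exact (natDegree_mul_le_of_le natDegree_X_le (by omega : _ ≤ p.natDegree)).trans (by omega)

section Nontrivial

variable [Nontrivial R] {p : R[X]}

theorem natDegree_recurrenceRHS_sub_lt (hp : p ≠ 0) :
    (recurrenceRHS p - X ^ 3 * p).natDegree < (X ^ 3 * p).natDegree := by
  rw [natDegree_X_pow_mul 3 hp]
  exact (natDegree_recurrenceRHS_sub_le p).trans_lt (by omega)

theorem natDegree_recurrenceRHS (hp : p ≠ 0) :
    (recurrenceRHS p).natDegree = p.natDegree + 3 := by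
  rw [← add_sub_cancel (X ^ 3 * p) (recurrenceRHS p),
    natDegree_add_eq_left_of_natDegree_lt (natDegree_recurrenceRHS_sub_lt hp), natDegree_X_pow_mul 3 hp]

theorem leadingCoeff_recurrenceRHS (hp : p ≠ 0) :
    (recurrenceRHS p).leadingCoeff = p.leadingCoeff := by
  rw [← add_sub_cancel (X ^ 3 * p) (recurrenceRHS p),
    leadingCoeff_add_of_degree_lt' (degree_lt_degree (natDegree_recurrenceRHS_sub_lt hp)),
    leadingCoeff_monic_mul (monic_X_pow 3)]

end Nontrivial

variable [IsDomain R] [CharZero R]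

theorem natDegree_recurrenceLHS (w : R[X]) : (recurrenceLHS w).natDegree = w.natDegree := by
  rcases eq_or_ne w 0 with rfl | hw
  · simp [recurrenceLHS]
  refine natDegree_eq_of_le_of_coeff_ne_zero (natDegree_recurrenceLHS_le w) ?_
  rw [coeff_recurrenceLHS_natDegree]
  exact mul_ne_zero (Nat.cast_add_one_ne_zero _) (leadingCoeff_ne_zero.mpr hw)

theorem leadingCoeff_recurrenceLHS (w : R[X]) :
    (recurrenceLHS w).leadingCoeff = (w.natDegree + 1) * w.leadingCoeff := by
  rw [leadingCoeff, natDegree_recurrenceLHS, coeff_recurrenceLHS_natDegree]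

end Polynomial

/-- The polynomials `C_n` defined by `C_0 = τ²/3 - 1/3` and the differential recurrence
have degree exactly `3n + 2` with leading coefficient `1/(3^{n+1}(n+1)!)`. -/
theorem C_degree_leadingCoeff (Cs : ℕ → Polynomial ℚ)
    (h0 : Cs 0 = C (1 / 3) * X ^ 2 - C (1 / 3))
    (hrec : ∀ n : ℕ,
      Cs (n + 1) + X * derivative (Cs (n + 1)) - derivative (derivative (Cs (n + 1))) =
        X * (X ^ 2 - C 2) * Cs n - (C 2 * X ^ 2 - 1) * derivative (Cs n) +
          X * derivative (derivative (Cs n))) :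
    ∀ n : ℕ, (Cs n).natDegree = 3 * n + 2 ∧
      (Cs n).leadingCoeff = 1 / (3 ^ (n + 1) * (n + 1).factorial : ℚ) := by
  intro n
  induction n with
  | zero =>
    have hdeg : (Cs 0).natDegree = 2 := by
      rw [h0, natDegree_sub_C, natDegree_C_mul_X_pow 2 _ (by norm_num)]
    refine ⟨hdeg, ?_⟩
    rw [leadingCoeff, hdeg, h0]
    simp
  | succ n ih =>
    obtain ⟨hdeg, hlc⟩ := ih
    have hne : Cs n ≠ 0 := leadingCoeff_ne_zero.mp (by rw [hlc]; positivity)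
    have hstep : recurrenceLHS (Cs (n + 1)) = recurrenceRHS (Cs n) := hrec n
    have hdeg' : (Cs (n + 1)).natDegree = 3 * (n + 1) + 2 := by
      rw [← natDegree_recurrenceLHS, hstep, natDegree_recurrenceRHS hne, hdeg]
      ring
    refine ⟨hdeg', ?_⟩
    have hlc' := congrArg leadingCoeff hstep
    rw [leadingCoeff_recurrenceLHS, leadingCoeff_recurrenceRHS hne, hlc, hdeg'] at hlc'
    rw [Nat.factorial_succ]
    push_cast at hlc' ⊢
    field_simp at hlc' ⊢
    linear_combination hlc'
end

section
/- Define coefficients e_{k,0} by e_{k,0} = (−1)^{k+1}/(k+3) − 2 Σ_{l=1}^{k} ((−1)^l/(l+2)) e_{k−l,0} − Σ_{l=1}^{k} Σ_{m=1}^{l} ((−1)^m/(m+1)) e_{k−l,0} e_{l−m,0}. Then e_{0,0} = −1/3, and the formal power series c_0(x) = Σ_{k≥0} e_{k,0} x^k satisfies 2(Σ_{k≥2}(−1)^k x^k/k)·(x·c_0(x) − 1)² = x² as formal power series in x = λ − 1. -/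
/-!
Put `x = λ - 1` and `T_s = logTail s = ∑ (-1)ⁿ xⁿ / (n + s)`, so that `λ - log λ - 1 = x² T₂` and
`T_s = 1/s - x T_{s+1}`. Read coefficientwise, the recurrence says exactly
`c₀ = -T₃ + 2 x T₃ c₀ + x T₂ c₀²`; together with `2 T₂ = 1 - 2 x T₃` this rearranges to
`2 T₂ (x c₀ - 1)² - 1 = 2 x (x T₂ c₀² + 2 x T₃ c₀ - T₃ - c₀) = 0`.
-/

open PowerSeries

theorem coeff_mul_eq_sum_Icc_of_constantCoeff_eq_zero {R : Type*} [Semiring R] {φ : R⟦X⟧}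
    (hφ : constantCoeff φ = 0) (ψ : R⟦X⟧) (k : ℕ) :
    coeff k (φ * ψ) = ∑ l ∈ Finset.Icc 1 k, coeff l φ * coeff (k - l) ψ := by
  rw [coeff_mul, Finset.Nat.sum_antidiagonal_eq_sum_range_succ (fun i j => coeff i φ * coeff j ψ),
    Finset.range_eq_Ico, Finset.sum_eq_sum_Ico_succ_bot k.succ_pos,
    coeff_zero_eq_constantCoeff_apply, hφ, zero_mul, zero_add]
  rfl

theorem coeff_sub_C_constantCoeff_mul {R : Type*} [Ring R] (φ ψ : R⟦X⟧) (k : ℕ) :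
    coeff k ((φ - C (constantCoeff φ)) * ψ) =
      ∑ l ∈ Finset.Icc 1 k, coeff l φ * coeff (k - l) ψ := by
  rw [coeff_mul_eq_sum_Icc_of_constantCoeff_eq_zero (by simp)]
  refine Finset.sum_congr rfl fun l hl => ?_
  rw [map_sub, coeff_C, if_neg (by grind), sub_zero]

/-- Up to the sign `(-1) ^ (s - 1)`, `X ^ s * logTail s` is the tail
`∑_{n ≥ s} (-1) ^ (n - 1) Xⁿ / n` of `log (1 + X)`. -/
def logTail (s : ℕ) : ℚ⟦X⟧ := mk fun n => (-1) ^ n / (n + s)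

@[simp]
theorem coeff_logTail (s n : ℕ) : coeff n (logTail s) = (-1) ^ n / (n + s) := coeff_mk _ _

@[simp]
theorem constantCoeff_logTail (s : ℕ) : constantCoeff (logTail s) = (s : ℚ)⁻¹ := by
  simp [logTail]

theorem logTail_eq_C_sub_X_mul (s : ℕ) : logTail s = C (s : ℚ)⁻¹ - X * logTail (s + 1) := by
  ext (_ | n) <;> simp [coeff_succ_X_mul, pow_succ]
  ring

theorem X_mul_logTail_succ (s : ℕ) :
    X * logTail (s + 1) = -(logTail s - C (constantCoeff (logTail s))) := by
  rw [constantCoeff_logTail, logTail_eq_C_sub_X_mul s]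
  ring

theorem coeff_X_mul_logTail_succ_mul (s : ℕ) (ψ : ℚ⟦X⟧) (k : ℕ) :
    coeff k (X * logTail (s + 1) * ψ) =
      -∑ l ∈ Finset.Icc 1 k, (-1) ^ l / (l + s) * coeff (k - l) ψ := by
  simp only [X_mul_logTail_succ, neg_mul, map_neg, coeff_sub_C_constantCoeff_mul, coeff_logTail]

theorem mk_eq_of_recurrence (e : ℕ → ℚ) (hrec : ∀ k : ℕ, e k = (-1 : ℚ) ^ (k + 1) / (k + 3)
      - 2 * ∑ l ∈ Finset.Icc 1 k, ((-1 : ℚ) ^ l / (l + 2)) * e (k - l)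
      - ∑ l ∈ Finset.Icc 1 k, ∑ m ∈ Finset.Icc 1 l,
          ((-1 : ℚ) ^ m / (m + 1)) * e (k - l) * e (l - m)) :
    mk e = -logTail 3 + 2 * (X * logTail 3 * mk e) + X * logTail 2 * mk e * mk e := by
  have hquad (k : ℕ) : coeff k (X * logTail 2 * mk e * mk e) = -∑ l ∈ Finset.Icc 1 k,
      ∑ m ∈ Finset.Icc 1 l, (-1) ^ m / (m + 1) * e (k - l) * e (l - m) := by
    rw [coeff_mul_eq_sum_Icc_of_constantCoeff_eq_zero (by simp), ← Finset.sum_neg_distrib]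
    refine Finset.sum_congr rfl fun l _ => ?_
    rw [coeff_X_mul_logTail_succ_mul, neg_mul, Finset.sum_mul]
    simp [mul_right_comm]
  ext k
  rw [coeff_mk, hrec k]
  simp only [two_mul, map_add, map_neg, coeff_logTail, coeff_X_mul_logTail_succ_mul, hquad,
    coeff_mk]
  push_cast
  ring

theorem mk_ite_eq_X_sq_mul_logTail_two :
    (mk fun k : ℕ => if 2 ≤ k then (-1 : ℚ) ^ k / k else 0) = X ^ 2 * logTail 2 := by
  ext (_ | _ | n) <;> simp [coeff_X_pow_mul']
  ring

/-- With `e_{k,0}` defined by the stated quadratic recurrence, `e_{0,0} = -1/3` and the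
formal power series `c₀(x) = Σ e_{k,0} x^k` satisfies
`2 (Σ_{k≥2} (-1)^k x^k / k) (x c₀(x) - 1)² = x²` in `ℚ[[x]]`. -/
theorem e_recurrence_solution (e : ℕ → ℚ)
    (hrec : ∀ k : ℕ, e k = (-1 : ℚ) ^ (k + 1) / (k + 3)
      - 2 * ∑ l ∈ Finset.Icc 1 k, ((-1 : ℚ) ^ l / (l + 2)) * e (k - l)
      - ∑ l ∈ Finset.Icc 1 k, ∑ m ∈ Finset.Icc 1 l,
          ((-1 : ℚ) ^ m / (m + 1)) * e (k - l) * e (l - m)) :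
    e 0 = -(1 / 3) ∧
    2 * (PowerSeries.mk fun k : ℕ => if 2 ≤ k then (-1 : ℚ) ^ k / k else 0) *
        (PowerSeries.X * PowerSeries.mk e - 1) ^ 2 = (PowerSeries.X : PowerSeries ℚ) ^ 2 := by
  refine ⟨by rw [hrec 0]; norm_num, ?_⟩
  have hE := mk_eq_of_recurrence e hrec
  have hshift : logTail 2 = C (1 / 2) - X * logTail 3 := by
    simpa using logTail_eq_C_sub_X_mul 2
  have hhalf : (2 : ℚ⟦X⟧) * C (1 / 2) = 1 := by
    rw [← map_ofNat C 2, ← map_mul]; norm_num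
  rw [mk_ite_eq_X_sq_mul_logTail_two]
  linear_combination (-2 * X ^ 3) * hE + (X ^ 2 * (2 - 4 * X * mk e)) * hshift
    + (X ^ 2 * (1 - 2 * X * mk e)) * hhalf
end
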